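/- arXiv:2305.06089 — 8 statements merged into one kernel-verified Lean document; each statement's English description precedes it below -/
import Mathlib

section
/- Let X and Y be Banach spaces and let W1 ⊆ X, W2 ⊆ Y be nonempty sets with W1 ≠ {0} and W2 ≠ {0}. If the set W1 ⊗ W2 := {x ⊗ y : x ∈ W1, y ∈ W2} is relatively weakly compact in the projective tensor product X ⊗̂π Y, then both W1 and W2 are relatively weakly compact. -/
open Filter Topology NormedSpace
open scoped ENNReal NNReal

/-- `Z`, together with the continuous bilinear map `m`, is (a realization of) the projective
tensor product `X ⊗̂π Y`: the span of elementary tensors is dense, and every continuous bilinear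
map into a Banach space lifts to a continuous linear map on `Z` with the same norm. -/
structure IsProjTensorProduct (X Y Z : Type*) [NormedAddCommGroup X] [NormedSpace ℝ X]
    [NormedAddCommGroup Y] [NormedSpace ℝ Y] [NormedAddCommGroup Z] [NormedSpace ℝ Z]
    (m : X →L[ℝ] Y →L[ℝ] Z) : Prop where
  dense_span : Dense (Submodule.span ℝ {z : Z | ∃ x y, m x y = z} : Set Z)
  lift : ∀ (W : Type) [NormedAddCommGroup W] [NormedSpace ℝ W] [CompleteSpace W]
    (B : X →L[ℝ] Y →L[ℝ] W), ∃ T : Z →L[ℝ] W, ‖T‖ = ‖B‖ ∧ ∀ x y, T (m x y) = B x y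

/-- A set is relatively weakly compact if its closure in the weak topology is weakly compact. -/
def RelWeakCompact (X : Type*) [SeminormedAddCommGroup X] [NormedSpace ℝ X] (A : Set X) : Prop :=
  IsCompact (closure ((toWeakSpace ℝ X) '' A))

/-- A set is relatively norm compact if its norm closure is compact. -/
def RelNormCompact (X : Type*) [SeminormedAddCommGroup X] [NormedSpace ℝ X] (A : Set X) : Prop :=
  IsCompact (closure A)

/-- A sequence is weakly Cauchy if every continuous functional sends it to a convergent sequence. -/
def WeaklyCauchySeq {X : Type*} [SeminormedAddCommGroup X] [NormedSpace ℝ X] (x : ℕ → X) : Prop :=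
  ∀ f : X →L[ℝ] ℝ, ∃ l : ℝ, Tendsto (fun n => f (x n)) atTop (nhds l)

/-- A sequence is weakly null if it converges to `0` in the weak topology. -/
def WeaklyNullSeq {X : Type*} [SeminormedAddCommGroup X] [NormedSpace ℝ X] (x : ℕ → X) : Prop :=
  ∀ f : X →L[ℝ] ℝ, Tendsto (fun n => f (x n)) atTop (nhds 0)

/-- A set is weakly precompact if every sequence in it has a weakly Cauchy subsequence. -/
def WeaklyPrecompact {X : Type*} [SeminormedAddCommGroup X] [NormedSpace ℝ X] (A : Set X) : Prop :=
  ∀ x : ℕ → X, (∀ n, x n ∈ A) → ∃ φ : ℕ → ℕ, StrictMono φ ∧ WeaklyCauchySeq (x ∘ φ)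

/-- A (weakly) compact operator maps the closed unit ball to a relatively (weakly) compact set. -/
def WeaklyCompactOp {X Y : Type*} [SeminormedAddCommGroup X] [NormedSpace ℝ X]
    [SeminormedAddCommGroup Y] [NormedSpace ℝ Y] (T : X →L[ℝ] Y) : Prop :=
  RelWeakCompact Y (T '' Metric.closedBall 0 1)

/-!
Fix `y₀ ∈ W₂` with `y₀ ≠ 0` and `f ∈ Y*` with `f y₀ = 1`. Every functional `l` on `X` extends
along `J : x ↦ x ⊗ y₀` to the functional on `X ⊗̂π Y` lifting the bilinear form `l ⊗ f`, with norm
`‖l‖ ‖f‖`. Consequently `J` is bounded below, so its range is norm closed, hence weakly closed by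
Mazur's theorem, and `J` is a homeomorphism onto its range for the weak topologies. The weak
closure of `W₁` then lies in the preimage under this weakly closed embedding of the weakly compact
weak closure of `W₁ ⊗ W₂`, so it is compact. Exchanging the factors gives the claim for `W₂`.
-/

lemma Set.Nonempty.exists_ne_of_ne_singleton {α : Type*} {s : Set α} {a : α} (hs : s.Nonempty)
    (h : s ≠ {a}) : ∃ x ∈ s, x ≠ a := by
  by_contra! hc
  exact h (Set.eq_singleton_iff_nonempty_unique_mem.mpr ⟨hs, hc⟩)

section WeakTopology

variable {X Z : Type*} [NormedAddCommGroup X] [NormedSpace ℝ X]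
  [NormedAddCommGroup Z] [NormedSpace ℝ Z]

lemma RelWeakCompact.mono {A B : Set X} (hB : RelWeakCompact X B) (hAB : A ⊆ B) :
    RelWeakCompact X A :=
  hB.of_isClosed_subset isClosed_closure (closure_mono (Set.image_mono hAB))

lemma RelWeakCompact.preimage {T : X →L[ℝ] Z} (hT : IsClosedEmbedding (WeakSpace.map T))
    {A : Set Z} (hA : RelWeakCompact Z A) : RelWeakCompact X (T ⁻¹' A) := by
  refine (hT.isCompact_preimage hA).of_isClosed_subset isClosed_closure
    (closure_minimal ?_ (isClosed_closure.preimage (WeakSpace.map T).continuous))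
  rintro _ ⟨x, hx, rfl⟩
  exact subset_closure ⟨T x, hx, rfl⟩

lemma ContinuousLinearMap.antilipschitz_of_forall_exists_comp_eq {T : X →L[ℝ] Z} {C : ℝ≥0}
    (hT : ∀ l : StrongDual ℝ X, ∃ g : StrongDual ℝ Z, ‖g‖ ≤ C * ‖l‖ ∧ g ∘L T = l) :
    AntilipschitzWith C T := by
  refine T.antilipschitz_of_bound fun x => ?_
  obtain ⟨l, hl, hlx⟩ := exists_dual_vector'' ℝ x
  obtain ⟨g, hg, rfl⟩ := hT l
  calc ‖x‖ = g (T x) := hlx.symm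
    _ ≤ ‖g‖ * ‖T x‖ := (le_abs_self _).trans (g.le_opNorm _)
    _ ≤ C * ‖T x‖ := by
        gcongr
        simpa using hg.trans (mul_le_of_le_one_right C.2 hl)

lemma isInducing_weakSpaceMap_of_forall_exists_comp_eq {T : X →L[ℝ] Z}
    (hT : ∀ l : StrongDual ℝ X, ∃ g : StrongDual ℝ Z, g ∘L T = l) :
    IsInducing (WeakSpace.map T) := by
  choose g hg using hT
  let ψ : WeakSpace ℝ Z → StrongDual ℝ X → ℝ := fun z l => g l z
  have hψ : Continuous ψ :=
    continuous_pi fun l => WeakBilin.eval_continuous (topDualPairing ℝ Z).flip (g l)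
  refine IsInducing.of_comp (WeakSpace.map T).continuous hψ ?_
  have hcomp : ψ ∘ WeakSpace.map T = fun x l => (topDualPairing ℝ X).flip x l := by
    funext x l
    exact DFunLike.congr_fun (hg l) x
  rw [hcomp]
  exact ⟨rfl⟩

lemma isClosedEmbedding_weakSpaceMap_of_forall_exists_comp_eq [CompleteSpace X]
    {T : X →L[ℝ] Z} {C : ℝ≥0}
    (hT : ∀ l : StrongDual ℝ X, ∃ g : StrongDual ℝ Z, ‖g‖ ≤ C * ‖l‖ ∧ g ∘L T = l) :
    IsClosedEmbedding (WeakSpace.map T) := by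
  have hanti := T.antilipschitz_of_forall_exists_comp_eq hT
  refine ⟨⟨isInducing_weakSpaceMap_of_forall_exists_comp_eq
    fun l => (hT l).imp fun _ => And.right, hanti.injective⟩, ?_⟩
  have hclosed : IsClosed (Set.range T) := hanti.isClosed_range T.uniformContinuous
  have hweak := (LinearMap.range (T : X →ₗ[ℝ] Z)).convex.toWeakSpace_closure ℝ
  rw [LinearMap.coe_range, ContinuousLinearMap.coe_coe, hclosed.closure_eq] at hweak
  have hrange : Set.range (WeakSpace.map T) = toWeakSpace ℝ Z '' Set.range T :=
    Set.range_comp (toWeakSpace ℝ Z) T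
  rw [hrange, hweak]
  exact isClosed_closure

end WeakTopology

namespace IsProjTensorProduct

variable {X Y Z : Type*} [NormedAddCommGroup X] [NormedSpace ℝ X]
  [NormedAddCommGroup Y] [NormedSpace ℝ Y] [NormedAddCommGroup Z] [NormedSpace ℝ Z]
  {m : X →L[ℝ] Y →L[ℝ] Z}

protected lemma flip (hm : IsProjTensorProduct X Y Z m) : IsProjTensorProduct Y X Z m.flip where
  dense_span := by
    convert hm.dense_span using 4
    ext z
    exact exists_comm
  lift W _ _ _ B := by
    obtain ⟨T, hT, hTm⟩ := hm.lift W B.flip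
    exact ⟨T, hT.trans B.opNorm_flip, fun y x => hTm x y⟩

lemma exists_comp_flip_eq (hm : IsProjTensorProduct X Y Z m) {y₀ : Y} (hy₀ : y₀ ≠ 0) :
    ∃ C : ℝ≥0, ∀ l : StrongDual ℝ X,
      ∃ g : StrongDual ℝ Z, ‖g‖ ≤ C * ‖l‖ ∧ g ∘L m.flip y₀ = l := by
  obtain ⟨f₀, -, hf₀⟩ := exists_dual_vector ℝ y₀ (norm_ne_zero_iff.mpr hy₀)
  set f := ‖y₀‖⁻¹ • f₀
  have hf : f y₀ = 1 := by
    simp [f, hf₀, inv_mul_cancel₀ (norm_ne_zero_iff.mpr hy₀)]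
  refine ⟨‖f‖₊, fun l => ?_⟩
  obtain ⟨g, hg, hgm⟩ := hm.lift ℝ (l.smulRight f)
  refine ⟨g, ?_, ?_⟩
  · rw [hg, ContinuousLinearMap.norm_smulRight_apply, mul_comm, coe_nnnorm]
  · ext x
    simp [hgm, hf]

lemma relWeakCompact_left [CompleteSpace X] (hm : IsProjTensorProduct X Y Z m)
    {W₁ : Set X} {W₂ : Set Y} (hW₂ : ∃ y ∈ W₂, y ≠ 0)
    (h : RelWeakCompact Z (Set.image2 (fun x y => m x y) W₁ W₂)) : RelWeakCompact X W₁ := by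
  obtain ⟨y₀, hy₀W, hy₀⟩ := hW₂
  obtain ⟨C, hC⟩ := hm.exists_comp_flip_eq hy₀
  exact (h.preimage (isClosedEmbedding_weakSpaceMap_of_forall_exists_comp_eq hC)).mono
    fun x hx => Set.mem_image2_of_mem hx hy₀W

end IsProjTensorProduct

theorem stmt0_general {X Y Z : Type*} [NormedAddCommGroup X] [NormedSpace ℝ X] [CompleteSpace X] [NormedAddCommGroup Y] [NormedSpace ℝ Y] [CompleteSpace Y] [NormedAddCommGroup Z] [NormedSpace ℝ Z]
    (m : X →L[ℝ] Y →L[ℝ] Z) (hm : IsProjTensorProduct X Y Z m)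
    (W1 : Set X) (W2 : Set Y) (hW1 : W1.Nonempty) (hW2 : W2.Nonempty)
    (hW1' : W1 ≠ {0}) (hW2' : W2 ≠ {0})
    (h : RelWeakCompact Z (Set.image2 (fun x y => m x y) W1 W2)) :
    RelWeakCompact X W1 ∧ RelWeakCompact Y W2 := by
  refine ⟨hm.relWeakCompact_left (hW2.exists_ne_of_ne_singleton hW2') h,
    hm.flip.relWeakCompact_left (hW1.exists_ne_of_ne_singleton hW1') ?_⟩
  rwa [Set.image2_swap] at h

theorem stmt0 {X Y Z : Type*} [NormedAddCommGroup X] [NormedSpace ℝ X] [CompleteSpace X] [NormedAddCommGroup Y] [NormedSpace ℝ Y] [CompleteSpace Y] [NormedAddCommGroup Z] [NormedSpace ℝ Z] [CompleteSpace Z]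
    (m : X →L[ℝ] Y →L[ℝ] Z) (hm : IsProjTensorProduct X Y Z m)
    (W1 : Set X) (W2 : Set Y) (hW1 : W1.Nonempty) (hW2 : W2.Nonempty)
    (hW1' : W1 ≠ {0}) (hW2' : W2 ≠ {0})
    (h : RelWeakCompact Z (Set.image2 (fun x y => m x y) W1 W2)) :
    RelWeakCompact X W1 ∧ RelWeakCompact Y W2 :=
  stmt0_general m hm W1 W2 hW1 hW2 hW1' hW2' h
end

section
/- Let X and Y be Banach spaces, let C1 ⊆ X be relatively norm compact and C2 ⊆ Y relatively weakly compact. Then C1 ⊗ C2 := {x ⊗ y : x ∈ C1, y ∈ C2} is relatively weakly compact in the projective tensor product X ⊗̂π Y. -/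
open Filter Topology NormedSpace
open scoped ENNReal NNReal

/-!
The map `(x, y) ↦ x ⊗ y` is continuous from `X × (Y, weak)` to `(X ⊗̂π Y, weak)` on
`X × K` whenever `K` is norm bounded: for a functional `f` the error
`f (x ⊗ y) - f (x₀ ⊗ y)` is at most `‖f‖ ‖m‖ ‖x - x₀‖ sup_K ‖y‖`, while `y ↦ f (x₀ ⊗ y)` is weakly
continuous. Weakly compact sets are norm bounded by Banach–Steinhaus, so `C1 ⊗ C2` lies in the
continuous image of the compact set `closure C1 × weak-closure C2`.
-/

section
variable {𝕜 X Y Z : Type*} [NontriviallyNormedField 𝕜]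
  [NormedAddCommGroup X] [NormedSpace 𝕜 X] [NormedAddCommGroup Y] [NormedSpace 𝕜 Y]
  [NormedAddCommGroup Z] [NormedSpace 𝕜 Z]

theorem continuousOn_bilinearForm_weakSpace (b : X →L[𝕜] Y →L[𝕜] 𝕜) {K : Set (WeakSpace 𝕜 Y)}
    {M : ℝ} (hK : ∀ w ∈ K, ‖(toWeakSpace 𝕜 Y).symm w‖ ≤ M) :
    ContinuousOn (fun p : X × WeakSpace 𝕜 Y => b p.1 ((toWeakSpace 𝕜 Y).symm p.2))
      (Set.univ ×ˢ K) := by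
  rintro ⟨x₀, w₀⟩ -
  have hsplit : (fun p : X × WeakSpace 𝕜 Y => b p.1 ((toWeakSpace 𝕜 Y).symm p.2)) =
      fun p => b (p.1 - x₀) ((toWeakSpace 𝕜 Y).symm p.2) +
        b x₀ ((toWeakSpace 𝕜 Y).symm p.2) := by
    funext p; simp
  have hfixed : Continuous fun p : X × WeakSpace 𝕜 Y => b x₀ ((toWeakSpace 𝕜 Y).symm p.2) :=
    (WeakBilin.eval_continuous (topDualPairing 𝕜 Y).flip (b x₀)).comp continuous_snd
  have hbound :
      Tendsto (fun p : X × WeakSpace 𝕜 Y => ‖b‖ * ‖p.1 - x₀‖ * M) (𝓝 (x₀, w₀)) (𝓝 0) := by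
    have : Continuous fun p : X × WeakSpace 𝕜 Y => ‖b‖ * ‖p.1 - x₀‖ * M := by fun_prop
    simpa using this.tendsto (x₀, w₀)
  have hsmall : Tendsto (fun p : X × WeakSpace 𝕜 Y => b (p.1 - x₀) ((toWeakSpace 𝕜 Y).symm p.2))
      (𝓝[Set.univ ×ˢ K] (x₀, w₀)) (𝓝 0) := by
    refine squeeze_zero_norm' ?_ (hbound.mono_left nhdsWithin_le_nhds)
    filter_upwards [self_mem_nhdsWithin] with p hp
    calc ‖b (p.1 - x₀) ((toWeakSpace 𝕜 Y).symm p.2)‖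
        ≤ ‖b‖ * ‖p.1 - x₀‖ * ‖(toWeakSpace 𝕜 Y).symm p.2‖ := b.le_opNorm₂ _ _
      _ ≤ ‖b‖ * ‖p.1 - x₀‖ * M := by gcongr; exact hK _ hp.2
  rw [hsplit, ContinuousWithinAt]
  simpa using hsmall.add hfixed.continuousAt.continuousWithinAt

theorem continuousOn_bilinear_weakSpace (B : X →L[𝕜] Y →L[𝕜] Z) {K : Set (WeakSpace 𝕜 Y)}
    {M : ℝ} (hK : ∀ w ∈ K, ‖(toWeakSpace 𝕜 Y).symm w‖ ≤ M) :
    ContinuousOn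
      (fun p : X × WeakSpace 𝕜 Y => toWeakSpace 𝕜 Z (B p.1 ((toWeakSpace 𝕜 Y).symm p.2)))
      (Set.univ ×ˢ K) := by
  rw [continuousOn_iff_continuous_domRestrict]
  refine WeakBilin.continuous_of_continuous_eval _ fun f => ?_
  exact continuousOn_iff_continuous_domRestrict.mp <|
    continuousOn_bilinearForm_weakSpace ((ContinuousLinearMap.compL 𝕜 Y Z 𝕜 f).comp B) hK

end

section
variable {𝕜 X Y Z : Type*} [RCLike 𝕜]
  [NormedAddCommGroup X] [NormedSpace 𝕜 X] [NormedAddCommGroup Y] [NormedSpace 𝕜 Y]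
  [NormedAddCommGroup Z] [NormedSpace 𝕜 Z]

theorem IsCompact.exists_norm_le_of_weakSpace {K : Set (WeakSpace 𝕜 Y)} (hK : IsCompact K) :
    ∃ M, ∀ w ∈ K, ‖(toWeakSpace 𝕜 Y).symm w‖ ≤ M := by
  have hpt : ∀ f : StrongDual 𝕜 Y, ∃ C, ∀ w : K,
      ‖inclusionInDoubleDual 𝕜 Y ((toWeakSpace 𝕜 Y).symm w) f‖ ≤ C := fun f =>
    let ⟨C, hC⟩ := hK.exists_bound_of_continuousOn
      (WeakBilin.eval_continuous (topDualPairing 𝕜 Y).flip f).continuousOn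
    ⟨C, fun w => hC w w.2⟩
  obtain ⟨C, hC⟩ := banach_steinhaus hpt
  exact ⟨C, fun w hw =>
    (inclusionInDoubleDualLi 𝕜).norm_map ((toWeakSpace 𝕜 Y).symm w) ▸ hC ⟨w, hw⟩⟩

theorem IsCompact.image_bilinear_weakSpace (B : X →L[𝕜] Y →L[𝕜] Z)
    {K₁ : Set X} {K₂ : Set (WeakSpace 𝕜 Y)} (h₁ : IsCompact K₁) (h₂ : IsCompact K₂) :
    IsCompact ((fun p : X × WeakSpace 𝕜 Y => toWeakSpace 𝕜 Z (B p.1 ((toWeakSpace 𝕜 Y).symm p.2)))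
      '' K₁ ×ˢ K₂) := by
  obtain ⟨M, hM⟩ := h₂.exists_norm_le_of_weakSpace
  exact (h₁.prod h₂).image_of_continuousOn <|
    (continuousOn_bilinear_weakSpace B hM).mono (Set.prod_mono (Set.subset_univ _) le_rfl)

end

theorem stmt1_general {X Y Z : Type*} [NormedAddCommGroup X] [NormedSpace ℝ X] [NormedAddCommGroup Y] [NormedSpace ℝ Y] [NormedAddCommGroup Z] [NormedSpace ℝ Z]
    (m : X →L[ℝ] Y →L[ℝ] Z)
    (C1 : Set X) (C2 : Set Y) (hC1 : RelNormCompact X C1) (hC2 : RelWeakCompact Y C2) :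
    RelWeakCompact Z (Set.image2 (fun x y => m x y) C1 C2) := by
  have hK := IsCompact.image_bilinear_weakSpace m hC1 hC2
  refine hK.of_isClosed_subset isClosed_closure (closure_minimal ?_ hK.isClosed)
  rintro - ⟨-, ⟨x, hx, y, hy, rfl⟩, rfl⟩
  exact ⟨(x, toWeakSpace ℝ Y y), ⟨subset_closure hx, subset_closure ⟨y, hy, rfl⟩⟩, rfl⟩

theorem stmt1 {X Y Z : Type*} [NormedAddCommGroup X] [NormedSpace ℝ X] [CompleteSpace X] [NormedAddCommGroup Y] [NormedSpace ℝ Y] [CompleteSpace Y] [NormedAddCommGroup Z] [NormedSpace ℝ Z] [CompleteSpace Z]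
    (m : X →L[ℝ] Y →L[ℝ] Z) (hm : IsProjTensorProduct X Y Z m)
    (C1 : Set X) (C2 : Set Y) (hC1 : RelNormCompact X C1) (hC2 : RelWeakCompact Y C2) :
    RelWeakCompact Z (Set.image2 (fun x y => m x y) C1 C2) :=
  stmt1_general m C1 C2 hC1 hC2
end

section
/- Let X and Y be Banach spaces, C1 ⊆ X relatively norm compact and C2 ⊆ Y weakly precompact (every sequence in C2 has a weakly Cauchy subsequence). Then C1 ⊗ C2 := {x ⊗ y : x ∈ C1, y ∈ C2} is weakly precompact in X ⊗̂π Y. -/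
open Filter Topology NormedSpace
open scoped ENNReal NNReal

namespace WeaklyCauchySeq

variable {E F : Type*} [SeminormedAddCommGroup E] [NormedSpace ℝ E]
  [SeminormedAddCommGroup F] [NormedSpace ℝ F] {w : ℕ → E}

/-- Banach–Steinhaus applied to the images in the bidual; the dual is complete even when `E` is
not. -/
theorem exists_norm_le (hw : WeaklyCauchySeq w) : ∃ M, ∀ n, ‖w n‖ ≤ M := by
  have hpointwise : ∀ f : StrongDual ℝ E, ∃ C, ∀ n, ‖inclusionInDoubleDual ℝ E (w n) f‖ ≤ C := by
    intro f
    obtain ⟨l, hl⟩ := hw f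
    obtain ⟨C, hC⟩ := hl.norm.bddAbove_range
    exact ⟨C, fun n => hC (Set.mem_range_self n)⟩
  obtain ⟨M, hM⟩ := banach_steinhaus hpointwise
  exact ⟨M, fun n => ((inclusionInDoubleDualLi ℝ).norm_map (w n)).symm.trans_le (hM n)⟩

theorem map (hw : WeaklyCauchySeq w) (T : E →L[ℝ] F) : WeaklyCauchySeq (T ∘ w) :=
  fun f => hw (f.comp T)

theorem add_tendsto_zero (hw : WeaklyCauchySeq w) {v : ℕ → E} (hv : Tendsto v atTop (𝓝 0)) :
    WeaklyCauchySeq (w + v) := by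
  intro f
  obtain ⟨l, hl⟩ := hw f
  have hfv : Tendsto (fun n => f (v n)) atTop (𝓝 0) :=
    (f.continuous.tendsto' 0 0 (map_zero f)).comp hv
  exact ⟨l, by simpa using hl.add hfv⟩

end WeaklyCauchySeq

section Bilinear

variable {E F G : Type*} [SeminormedAddCommGroup E] [NormedSpace ℝ E]
  [SeminormedAddCommGroup F] [NormedSpace ℝ F] [SeminormedAddCommGroup G] [NormedSpace ℝ G]

theorem ContinuousLinearMap.tendsto_apply₂_zero_of_isBoundedUnder {ι : Type*} {l : Filter ι}
    (B : E →L[ℝ] F →L[ℝ] G) {u : ι → E} {w : ι → F} (hu : Tendsto u l (𝓝 0))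
    (hw : IsBoundedUnder (· ≤ ·) l (norm ∘ w)) :
    Tendsto (fun i => B (u i) (w i)) l (𝓝 0) :=
  ((B.continuous.tendsto' 0 0 (map_zero B)).comp hu).op_zero_isBoundedUnder_le hw
    (fun T y => T y) fun T y => T.le_opNorm y

/-- Splitting `B (u n) (w n) = B a (w n) + B (u n - a) (w n)`, the first term is weakly Cauchy and
the second tends to `0` in norm because `(w n)` is bounded. -/
theorem WeaklyCauchySeq.apply₂_of_tendsto (B : E →L[ℝ] F →L[ℝ] G) {u : ℕ → E} {a : E}
    {w : ℕ → F} (hu : Tendsto u atTop (𝓝 a)) (hw : WeaklyCauchySeq w) :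
    WeaklyCauchySeq fun n => B (u n) (w n) := by
  have hsplit : (fun n => B (u n) (w n)) = B a ∘ w + fun n => B (u n - a) (w n) := by
    ext n
    simp
  obtain ⟨M, hM⟩ := hw.exists_norm_le
  rw [hsplit]
  exact (hw.map (B a)).add_tendsto_zero <|
    B.tendsto_apply₂_zero_of_isBoundedUnder (tendsto_sub_nhds_zero_iff.mpr hu)
      (isBoundedUnder_of ⟨M, hM⟩)

end Bilinear

theorem stmt3_general {X Y Z : Type*} [NormedAddCommGroup X] [NormedSpace ℝ X] [NormedAddCommGroup Y] [NormedSpace ℝ Y] [NormedAddCommGroup Z] [NormedSpace ℝ Z]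
    (m : X →L[ℝ] Y →L[ℝ] Z)
    (C1 : Set X) (C2 : Set Y) (hC1 : RelNormCompact X C1) (hC2 : WeaklyPrecompact C2) :
    WeaklyPrecompact (Set.image2 (fun x y => m x y) C1 C2) := by
  intro z hz
  simp only [Set.mem_image2] at hz
  choose x hx y hy hxy using hz
  obtain rfl : z = fun n => m (x n) (y n) := funext fun n => (hxy n).symm
  obtain ⟨a, -, φ, hφ, hxφ⟩ := hC1.tendsto_subseq fun n => subset_closure (hx n)
  obtain ⟨ψ, hψ, hyψ⟩ := hC2 (y ∘ φ) fun n => hy _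
  exact ⟨φ ∘ ψ, hφ.comp hψ, hyψ.apply₂_of_tendsto m (hxφ.comp hψ.tendsto_atTop)⟩

theorem stmt3 {X Y Z : Type*} [NormedAddCommGroup X] [NormedSpace ℝ X] [CompleteSpace X] [NormedAddCommGroup Y] [NormedSpace ℝ Y] [CompleteSpace Y] [NormedAddCommGroup Z] [NormedSpace ℝ Z] [CompleteSpace Z]
    (m : X →L[ℝ] Y →L[ℝ] Z) (hm : IsProjTensorProduct X Y Z m)
    (C1 : Set X) (C2 : Set Y) (hC1 : RelNormCompact X C1) (hC2 : WeaklyPrecompact C2) :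
    WeaklyPrecompact (Set.image2 (fun x y => m x y) C1 C2) :=
  stmt3_general m C1 C2 hC1 hC2
end

section
/- Let X and Y be Banach spaces such that either X or Y has the Dunford–Pettis property, and let C1 ⊆ X and C2 ⊆ Y be relatively weakly compact sets. Then C1 ⊗ C2 := {x ⊗ y : x ∈ C1, y ∈ C2} is relatively weakly compact in the projective tensor product X ⊗̂π Y. -/
open Filter Topology NormedSpace
open scoped ENNReal NNReal

/-- The Dunford-Pettis property: for all weakly null sequences `(zₙ)` in `E` and `(φₙ)` in `E*`,
one has `φₙ(zₙ) → 0`. -/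
def DunfordPettis (E : Type*) [NormedAddCommGroup E] [NormedSpace ℝ E] : Prop :=
  ∀ (z : ℕ → E) (φ : ℕ → E →L[ℝ] ℝ), WeaklyNullSeq z → WeaklyNullSeq φ →
    Filter.Tendsto (fun n => φ n (z n)) Filter.atTop (nhds 0)

/-!
Composing `m` with a functional on `Z` gives a bilinear form `B`, so it suffices that every
continuous bilinear form is jointly continuous, for the weak topologies, on `K₁ × K₂`, where `Kᵢ`
is the weak closure of `Cᵢ`: the image of the compact set `K₁ × K₂` is then weakly compact.

Weakly compact sets are weakly sequentially compact (the easy half of Eberlein–Šmulian): the closed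
span of a sequence is separable, so countably many functionals separate its points, which makes
its weakly compact subsets metrizable.

If `B` were not continuous at `(x, y)` on `K₁ × K₂`, then `(x, y)` would lie in the weak closure of
`{|B - B (x, y)| ≥ ε}`, and one can choose inductively points `(uₙ, vₙ)` of that set with
`B (uₙ, vₘ) → B (x, vₘ)` for every `m` and `B (x, vₙ) → B (x, y)`. Along a subsequence `uₙ → x'`
and `vₙ → y'` weakly; then `B (x', vₘ) = B (x, vₘ)`, hence `B (x', y') = B (x, y)`, while the
Dunford–Pettis property gives `B (uₙ, vₙ) → B (x', y')`: a contradiction.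
-/

open Set

section WeakTopology

variable {X : Type*} [NormedAddCommGroup X] [NormedSpace ℝ X]

lemma continuous_apply_toWeakSpace_symm (f : StrongDual ℝ X) :
    Continuous fun z : WeakSpace ℝ X => f ((toWeakSpace ℝ X).symm z) :=
  WeakBilin.eval_continuous (topDualPairing ℝ X).flip f

lemma Filter.Tendsto.apply_toWeakSpace_symm {α : Type*} {l : Filter α} {u : α → WeakSpace ℝ X}
    {x : WeakSpace ℝ X} (hu : Tendsto u l (𝓝 x)) (f : StrongDual ℝ X) :
    Tendsto (fun i => f ((toWeakSpace ℝ X).symm (u i))) l (𝓝 (f ((toWeakSpace ℝ X).symm x))) :=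
  ((continuous_apply_toWeakSpace_symm f).tendsto x).comp hu

lemma TopologicalSpace.IsSeparable.exists_seq_dual_separating {𝕜 E : Type*} [RCLike 𝕜]
    [NormedAddCommGroup E] [NormedSpace 𝕜 E] {T : Set E} (hT : IsSeparable T) :
    ∃ g : ℕ → StrongDual 𝕜 E, ∀ u ∈ T, (∀ n, g n u = 0) → u = 0 := by
  obtain ⟨c, hc, hTc⟩ := hT
  obtain ⟨d, hd⟩ := (hc.insert 0).exists_eq_range (insert_nonempty 0 c)
  choose g hg_norm hg_d using fun n => exists_dual_vector'' 𝕜 (d n)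
  refine ⟨g, fun u hu hgu => norm_le_zero_iff.mp (le_of_forall_pos_lt_add fun ε hε => ?_)⟩
  have hu' : u ∈ closure (range d) := hd ▸ closure_mono (subset_insert 0 c) (hTc hu)
  obtain ⟨_, ⟨n, rfl⟩, hn⟩ := Metric.mem_closure_iff.mp hu' (ε / 2) (half_pos hε)
  have hdn : ‖d n‖ ≤ ‖u - d n‖ := calc
    ‖d n‖ = ‖g n (d n - u)‖ := by rw [map_sub, hgu, sub_zero, hg_d]; simp
    _ ≤ ‖d n - u‖ := by simpa using (g n).le_of_opNorm_le (hg_norm n) (d n - u)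
    _ = ‖u - d n‖ := norm_sub_rev _ _
  rw [dist_eq_norm] at hn
  calc ‖u‖ ≤ ‖u - d n‖ + ‖d n‖ := norm_le_norm_sub_add u (d n)
    _ < 0 + ε := by linarith

theorem IsCompact.isSeqCompact_weakSpace {K : Set (WeakSpace ℝ X)} (hK : IsCompact K) :
    IsSeqCompact K := by
  intro x hx
  set N := (Submodule.span ℝ (range fun n => (toWeakSpace ℝ X).symm (x n))).topologicalClosure
  obtain ⟨g, hg⟩ := ((countable_range _).isSeparable.span.closure :
    TopologicalSpace.IsSeparable (N : Set X)).exists_seq_dual_separating (𝕜 := ℝ)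
  set C := K ∩ toWeakSpace ℝ X '' N
  -- Mazur: the closed subspace `N` is weakly closed.
  have hC : IsCompact C := hK.inter_right <| by
    rw [← (Submodule.isClosed_topologicalClosure _).closure_eq, N.convex.toWeakSpace_closure ℝ]
    exact isClosed_closure
  have hxC : ∀ n, x n ∈ C := fun n => ⟨hx n, (toWeakSpace ℝ X).symm (x n),
    Submodule.le_topologicalClosure _ (Submodule.subset_span ⟨n, rfl⟩), by simp⟩
  have hmem : ∀ z : C, (toWeakSpace ℝ X).symm z ∈ N := fun z => by
    obtain ⟨w, hw, hzw⟩ := z.2.2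
    rwa [← hzw, LinearEquiv.symm_apply_apply]
  have : CompactSpace C := isCompact_iff_compactSpace.mp hC
  have : TopologicalSpace.MetrizableSpace C :=
    Metric.PiNatEmbed.TopologicalSpace.MetrizableSpace.of_countable_separating
      (fun n (z : C) => g n ((toWeakSpace ℝ X).symm z))
      (fun n => (continuous_apply_toWeakSpace_symm (g n)).comp continuous_subtype_val)
      fun a b hab => by
        by_contra! h
        refine hab (Subtype.ext ((toWeakSpace ℝ X).symm.injective (sub_eq_zero.mp ?_)))
        exact hg _ (N.sub_mem (hmem a) (hmem b)) fun n => by rw [map_sub, h n, sub_self]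
  have hCseq : IsSeqCompact C := by
    simpa using IsSeqCompact.range (continuous_subtype_val (p := (· ∈ C))).seqContinuous
  obtain ⟨z, hz, φ, hφ, hlim⟩ := hCseq hxC
  exact ⟨z, hz.1, φ, hφ, hlim⟩

end WeakTopology

lemma exists_seq_tendsto_of_mem_closure {α β : Type*} [TopologicalSpace α] [PseudoMetricSpace β]
    {A : Set α} {a : α} (ha : a ∈ closure A) (G : α → β) (hG : ContinuousAt G a)
    (Φ : α → α → β) (hΦ : ∀ q, ContinuousAt (Φ q) a) :
    ∃ p : ℕ → α, (∀ n, p n ∈ A) ∧ Tendsto (fun n => G (p n)) atTop (𝓝 (G a)) ∧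
      ∀ m, Tendsto (fun n => Φ (p m) (p n)) atTop (𝓝 (Φ (p m) a)) := by
  classical
  have hnext : ∀ (n : ℕ) (F : Finset α), ∃ q ∈ A, dist (G q) (G a) < 1 / (n + 1) ∧
      ∀ r ∈ F, dist (Φ r q) (Φ r a) < 1 / (n + 1) := fun n F => by
    have hε : (0 : ℝ) < 1 / (n + 1) := Nat.one_div_pos_of_nat
    have hnear : ∀ᶠ q in 𝓝 a, dist (G q) (G a) < 1 / (n + 1) ∧
        ∀ r ∈ F, dist (Φ r q) (Φ r a) < 1 / (n + 1) :=
      (hG.eventually (Metric.ball_mem_nhds _ hε)).and <|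
        F.eventually_all.2 fun r _ => (hΦ r).eventually (Metric.ball_mem_nhds _ hε)
    obtain ⟨q, hqA, hq⟩ := ((mem_closure_iff_frequently.mp ha).and_eventually hnear).exists
    exact ⟨q, hqA, hq⟩
  choose P hPA hPG hPΦ using hnext
  -- `F n = {p 0, …, p (n - 1)}`
  let F : ℕ → Finset α := fun n => Nat.rec ∅ (fun k Fk => insert (P k Fk) Fk) n
  let p : ℕ → α := fun n => P n (F n)
  have hpF : ∀ m n, m < n → p m ∈ F n := by
    intro m n hmn
    induction n with
    | zero => omega
    | succ n ih =>
      rcases Nat.lt_succ_iff_lt_or_eq.mp hmn with h | rfl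
      · exact Finset.mem_insert_of_mem (ih h)
      · exact Finset.mem_insert_self _ _
  have h0 : Tendsto (fun n : ℕ => 1 / ((n : ℝ) + 1)) atTop (𝓝 0) :=
    tendsto_one_div_add_atTop_nhds_zero_nat
  refine ⟨p, fun n => hPA _ _, ?_, fun m => ?_⟩
  · exact tendsto_iff_dist_tendsto_zero.2
      (squeeze_zero (fun _ => dist_nonneg) (fun n => (hPG n (F n)).le) h0)
  · refine tendsto_iff_dist_tendsto_zero.2
      (squeeze_zero' (Eventually.of_forall fun _ => dist_nonneg) ?_ h0)
    filter_upwards [eventually_gt_atTop m] with n hn using (hPΦ n (F n) (p m) (hpF m n hn)).le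

section DunfordPettis

variable {X Y : Type*} [NormedAddCommGroup X] [NormedSpace ℝ X]
  [NormedAddCommGroup Y] [NormedSpace ℝ Y]

lemma DunfordPettis.tendsto_apply_apply (hX : DunfordPettis X) (B : X →L[ℝ] Y →L[ℝ] ℝ)
    {u : ℕ → X} {v : ℕ → Y} {x : X} {y : Y}
    (hu : ∀ f : StrongDual ℝ X, Tendsto (fun n => f (u n)) atTop (𝓝 (f x)))
    (hv : ∀ f : StrongDual ℝ Y, Tendsto (fun n => f (v n)) atTop (𝓝 (f y))) :
    Tendsto (fun n => B (u n) (v n)) atTop (𝓝 (B x y)) := by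
  have hz : WeaklyNullSeq fun n => u n - x := fun f => by
    simpa using (hu f).sub_const (f x)
  have hφ : WeaklyNullSeq fun n => B.flip (v n) - B.flip y := fun F => by
    simpa using (hv (F ∘L B.flip)).sub_const (F (B.flip y))
  have hlim := ((hX _ _ hz hφ).add (hu (B.flip y))).add (hv (B x)) |>.sub_const (B x y)
  convert hlim using 2 with n
  · simp only [sub_apply, map_sub, ContinuousLinearMap.flip_apply]
    ring
  · simp

lemma tendsto_apply_apply_of_dunfordPettis (hDP : DunfordPettis X ∨ DunfordPettis Y)
    (B : X →L[ℝ] Y →L[ℝ] ℝ) {u : ℕ → X} {v : ℕ → Y} {x : X} {y : Y}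
    (hu : ∀ f : StrongDual ℝ X, Tendsto (fun n => f (u n)) atTop (𝓝 (f x)))
    (hv : ∀ f : StrongDual ℝ Y, Tendsto (fun n => f (v n)) atTop (𝓝 (f y))) :
    Tendsto (fun n => B (u n) (v n)) atTop (𝓝 (B x y)) := by
  rcases hDP with hX | hY
  · exact hX.tendsto_apply_apply B hu hv
  · simpa using hY.tendsto_apply_apply B.flip hv hu

lemma exists_subseq_tendsto_apply_apply_of_dunfordPettis
    (hDP : DunfordPettis X ∨ DunfordPettis Y) (B : X →L[ℝ] Y →L[ℝ] ℝ)
    {K₁ : Set (WeakSpace ℝ X)} {K₂ : Set (WeakSpace ℝ Y)} (hK₁ : IsSeqCompact K₁)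
    (hK₂ : IsSeqCompact K₂) {u : ℕ → X} {v : ℕ → Y} (hu : ∀ n, toWeakSpace ℝ X (u n) ∈ K₁)
    (hv : ∀ n, toWeakSpace ℝ Y (v n) ∈ K₂) {x : X} {b : ℝ}
    (hrow : ∀ m, Tendsto (fun n => B (u n) (v m)) atTop (𝓝 (B x (v m))))
    (hcol : Tendsto (fun n => B x (v n)) atTop (𝓝 b)) :
    ∃ φ : ℕ → ℕ, StrictMono φ ∧ Tendsto (fun n => B (u (φ n)) (v (φ n))) atTop (𝓝 b) := by
  obtain ⟨x', -, φ₁, hφ₁, hx'⟩ := hK₁ hu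
  obtain ⟨y', -, φ₂, hφ₂, hy'⟩ := hK₂ fun n => hv (φ₁ n)
  have hψ : StrictMono (φ₁ ∘ φ₂) := hφ₁.comp hφ₂
  have hu' : ∀ f : StrongDual ℝ X, Tendsto (fun n => f (u (φ₁ (φ₂ n)))) atTop
      (𝓝 (f ((toWeakSpace ℝ X).symm x'))) := fun f => by
    simpa [Function.comp_def] using (hx'.apply_toWeakSpace_symm f).comp hφ₂.tendsto_atTop
  have hv' : ∀ f : StrongDual ℝ Y, Tendsto (fun n => f (v (φ₁ (φ₂ n)))) atTop
      (𝓝 (f ((toWeakSpace ℝ Y).symm y'))) := fun f => by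
    simpa using hy'.apply_toWeakSpace_symm f
  have hrow' : ∀ m, B ((toWeakSpace ℝ X).symm x') (v m) = B x (v m) := fun m =>
    tendsto_nhds_unique (by simpa [Function.comp_def] using hu' (B.flip (v m)))
      ((hrow m).comp hψ.tendsto_atTop)
  have hb : B ((toWeakSpace ℝ X).symm x') ((toWeakSpace ℝ Y).symm y') = b :=
    tendsto_nhds_unique (hv' _)
      (by simpa [hrow', Function.comp_def] using hcol.comp hψ.tendsto_atTop)
  exact ⟨φ₁ ∘ φ₂, hψ, hb ▸ tendsto_apply_apply_of_dunfordPettis hDP B hu' hv'⟩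

lemma continuousOn_apply_apply_of_dunfordPettis (hDP : DunfordPettis X ∨ DunfordPettis Y)
    (B : X →L[ℝ] Y →L[ℝ] ℝ) {K₁ : Set (WeakSpace ℝ X)} {K₂ : Set (WeakSpace ℝ Y)}
    (hK₁ : IsSeqCompact K₁) (hK₂ : IsSeqCompact K₂) :
    ContinuousOn (fun p : WeakSpace ℝ X × WeakSpace ℝ Y =>
      B ((toWeakSpace ℝ X).symm p.1) ((toWeakSpace ℝ Y).symm p.2)) (K₁ ×ˢ K₂) := by
  set f := fun p : WeakSpace ℝ X × WeakSpace ℝ Y =>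
    B ((toWeakSpace ℝ X).symm p.1) ((toWeakSpace ℝ Y).symm p.2)
  intro a _
  rw [ContinuousWithinAt, Metric.tendsto_nhds]
  by_contra! hfar
  obtain ⟨ε, hε, hfreq⟩ := hfar
  have ha : a ∈ closure ({p | ε ≤ dist (f p) (f a)} ∩ K₁ ×ˢ K₂) :=
    mem_closure_iff_frequently.mpr (frequently_nhdsWithin_iff.mp hfreq)
  obtain ⟨p, hpA, hcol, hrow⟩ := exists_seq_tendsto_of_mem_closure ha
    (fun q => B ((toWeakSpace ℝ X).symm a.1) ((toWeakSpace ℝ Y).symm q.2))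
    ((continuous_apply_toWeakSpace_symm _).comp continuous_snd).continuousAt
    (fun q r => B ((toWeakSpace ℝ X).symm r.1) ((toWeakSpace ℝ Y).symm q.2))
    fun q => ((continuous_apply_toWeakSpace_symm (B.flip _)).comp continuous_fst).continuousAt
  obtain ⟨φ, -, hφ⟩ := exists_subseq_tendsto_apply_apply_of_dunfordPettis hDP B hK₁ hK₂
    (u := fun n => (toWeakSpace ℝ X).symm (p n).1) (v := fun n => (toWeakSpace ℝ Y).symm (p n).2)
    (fun n => by simpa using (hpA n).2.1) (fun n => by simpa using (hpA n).2.2) hrow hcol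
  obtain ⟨n, hn⟩ := (hφ.eventually (Metric.ball_mem_nhds _ hε)).exists
  exact (hpA (φ n)).1.not_gt hn

lemma continuousOn_toWeakSpace_apply_apply_of_dunfordPettis {Z : Type*} [NormedAddCommGroup Z]
    [NormedSpace ℝ Z] (hDP : DunfordPettis X ∨ DunfordPettis Y) (m : X →L[ℝ] Y →L[ℝ] Z)
    {K₁ : Set (WeakSpace ℝ X)} {K₂ : Set (WeakSpace ℝ Y)}
    (hK₁ : IsSeqCompact K₁) (hK₂ : IsSeqCompact K₂) :
    ContinuousOn (fun p : WeakSpace ℝ X × WeakSpace ℝ Y =>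
      toWeakSpace ℝ Z (m ((toWeakSpace ℝ X).symm p.1) ((toWeakSpace ℝ Y).symm p.2)))
      (K₁ ×ˢ K₂) := by
  rw [continuousOn_iff_continuous_domRestrict]
  refine WeakBilin.continuous_of_continuous_eval _ fun T => ?_
  exact continuousOn_iff_continuous_domRestrict.mp <| continuousOn_apply_apply_of_dunfordPettis hDP
    ((ContinuousLinearMap.compL ℝ Y Z ℝ T).comp m) hK₁ hK₂

end DunfordPettis

theorem stmt4_general {X Y Z : Type*} [NormedAddCommGroup X] [NormedSpace ℝ X] [NormedAddCommGroup Y] [NormedSpace ℝ Y] [NormedAddCommGroup Z] [NormedSpace ℝ Z]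
    (m : X →L[ℝ] Y →L[ℝ] Z)
    (hDP : DunfordPettis X ∨ DunfordPettis Y)
    (C1 : Set X) (C2 : Set Y) (hC1 : RelWeakCompact X C1) (hC2 : RelWeakCompact Y C2) :
    RelWeakCompact Z (Set.image2 (fun x y => m x y) C1 C2) := by
  set β := fun p : WeakSpace ℝ X × WeakSpace ℝ Y =>
    toWeakSpace ℝ Z (m ((toWeakSpace ℝ X).symm p.1) ((toWeakSpace ℝ Y).symm p.2))
  have hβ : IsCompact (β '' (closure (toWeakSpace ℝ X '' C1) ×ˢ closure (toWeakSpace ℝ Y '' C2))) :=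
    (hC1.prod hC2).image_of_continuousOn <| continuousOn_toWeakSpace_apply_apply_of_dunfordPettis
      hDP m hC1.isSeqCompact_weakSpace hC2.isSeqCompact_weakSpace
  refine hβ.of_isClosed_subset isClosed_closure (closure_minimal ?_ hβ.isClosed)
  rintro - ⟨-, ⟨x, hx, y, hy, rfl⟩, rfl⟩
  exact ⟨(toWeakSpace ℝ X x, toWeakSpace ℝ Y y),
    ⟨subset_closure (mem_image_of_mem _ hx), subset_closure (mem_image_of_mem _ hy)⟩, by simp [β]⟩

theorem stmt4 {X Y Z : Type*} [NormedAddCommGroup X] [NormedSpace ℝ X] [CompleteSpace X] [NormedAddCommGroup Y] [NormedSpace ℝ Y] [CompleteSpace Y] [NormedAddCommGroup Z] [NormedSpace ℝ Z] [CompleteSpace Z]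
    (m : X →L[ℝ] Y →L[ℝ] Z) (hm : IsProjTensorProduct X Y Z m)
    (hDP : DunfordPettis X ∨ DunfordPettis Y)
    (C1 : Set X) (C2 : Set Y) (hC1 : RelWeakCompact X C1) (hC2 : RelWeakCompact Y C2) :
    RelWeakCompact Z (Set.image2 (fun x y => m x y) C1 C2) :=
  stmt4_general m hDP C1 C2 hC1 hC2
end

section
/- Let X be a Banach space and 1 < p < ∞. The following are equivalent: (i) every coarse p-limited, relatively weakly compact subset of X is relatively norm compact; (ii) every coarse p-limited, weakly null sequence in X is norm null; (iii) every coarse p-limited, weakly precompact subset of X is relatively norm compact. -/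
open Filter Topology NormedSpace
open scoped ENNReal NNReal

/-- A set `A ⊆ X` is coarse `p`-limited if `T(A)` is relatively norm compact in `ℓp` for every
bounded operator `T : X → ℓp`. -/
def CoarsePLimited (p : ℝ≥0∞) [Fact (1 ≤ p)] {X : Type*} [NormedAddCommGroup X]
    [NormedSpace ℝ X] (A : Set X) : Prop :=
  ∀ T : X →L[ℝ] lp (fun _ : ℕ => ℝ) p, RelNormCompact _ (T '' A)

/-! (ii) is the special case of (i) and of (iii) for ranges of weakly null sequences: such a range
is relatively weakly compact, and a weakly null sequence with relatively norm compact range is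
norm null. Conversely, under (ii) a coarse `p`-limited weakly Cauchy sequence `(yₙ)` is norm
Cauchy, because the differences `y_{mₖ} - y_{nₖ}` with `mₖ, nₖ → ∞` are weakly null and lie in the
coarse `p`-limited set `A - A`; so coarse `p`-limited weakly precompact sets are totally bounded,
which is (iii). Finally (iii) implies (i) because relatively weakly compact sets are weakly
precompact: a sequence lies in a separable closed subspace, on which countably many functionals
separate points, so the weak topology is metrizable on the weakly compact set that matters. -/

open Set

theorem totallyBounded_of_forall_exists_cauchySeq_subseq {α : Type*} [UniformSpace α] {s : Set α}
    (h : ∀ u : ℕ → α, (∀ n, u n ∈ s) → ∃ φ : ℕ → ℕ, StrictMono φ ∧ CauchySeq (u ∘ φ)) :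
    TotallyBounded s := by
  intro V V_in
  contrapose! h
  obtain ⟨u, u_in, hu⟩ : ∃ u : ℕ → α, (∀ n, u n ∈ s) ∧
      ∀ n m, m < n → u m ∉ UniformSpace.ball (u n) V := by
    simp only [not_subset, mem_iUnion₂, not_exists, exists_prop] at h
    simpa only [forall_and, forall_mem_image, not_and] using! seq_of_forall_finite_exists h
  refine ⟨u, u_in, fun φ hφ huφ => ?_⟩
  obtain ⟨N, hN⟩ : ∃ N, ∀ p q, p ≥ N → q ≥ N → (u (φ p), u (φ q)) ∈ V :=
    huφ.mem_entourage V_in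
  exact hu (φ <| N + 1) (φ N) (hφ <| Nat.lt_add_one N) (hN (N + 1) N N.le_succ le_rfl)

theorem IsCompact.isSeqCompact_of_continuous_injOn {X Y : Type*} [TopologicalSpace X]
    [TopologicalSpace Y] [TopologicalSpace.MetrizableSpace Y] {K : Set X} (hK : IsCompact K)
    {f : X → Y} (hf : Continuous f) (hinj : InjOn f K) : IsSeqCompact K := by
  have : CompactSpace K := isCompact_iff_compactSpace.mp hK
  have hemb : IsEmbedding (fun k : K => f k) :=
    (hf.comp continuous_subtype_val).isClosedEmbedding (injOn_iff_injective.mp hinj) |>.isEmbedding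
  have : TopologicalSpace.MetrizableSpace K := hemb.metrizableSpace
  simpa using (isSeqCompact_univ (X := K)).image continuous_subtype_val.seqContinuous

section RCLike

variable {𝕜 X : Type*} [RCLike 𝕜] [NormedAddCommGroup X] [NormedSpace 𝕜 X]

theorem TopologicalSpace.IsSeparable.exists_countable_separating_dual {s : Set X}
    (hs : TopologicalSpace.IsSeparable s) :
    ∃ F : Set (StrongDual 𝕜 X), F.Countable ∧ ∀ x ∈ s, (∀ f ∈ F, f x = 0) → x = 0 := by
  obtain ⟨d, hd_count, hd⟩ := hs
  choose g hg_norm hg_eval using fun y : X => exists_dual_vector'' 𝕜 y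
  refine ⟨g '' d, hd_count.image g, fun x hx hzero => ?_⟩
  by_contra hx0
  have hpos : 0 < ‖x‖ := norm_pos_iff.mpr hx0
  obtain ⟨y, hy, hxy⟩ := Metric.mem_closure_iff.mp (hd hx) (‖x‖ / 2) (half_pos hpos)
  rw [dist_eq_norm] at hxy
  have hgy : g y x = 0 := hzero _ (mem_image_of_mem g hy)
  have : ‖y‖ < ‖x‖ / 2 :=
    calc ‖y‖ = ‖g y (y - x)‖ := by simp [map_sub, hgy, hg_eval]
      _ ≤ 1 * ‖y - x‖ := (g y).le_of_opNorm_le (hg_norm y) _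
      _ < ‖x‖ / 2 := by rwa [one_mul, norm_sub_rev]
  linarith [norm_le_insert' x y]

theorem tendsto_toWeakSpace_iff {α : Type*} {l : Filter α} {x : α → X} {y : X} :
    Tendsto (fun n => toWeakSpace 𝕜 X (x n)) l (𝓝 (toWeakSpace 𝕜 X y)) ↔
      ∀ f : StrongDual 𝕜 X, Tendsto (fun n => f (x n)) l (𝓝 (f y)) :=
  WeakBilin.tendsto_iff_forall_eval_tendsto _ fun _ _ h =>
    (SeparatingDual.eq_iff_forall_dual_eq (R := 𝕜)).mpr fun f => DFunLike.congr_fun h f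

end RCLike

section WeakTopology

variable {X : Type*} [NormedAddCommGroup X] [NormedSpace ℝ X]

theorem WeaklyNullSeq.tendsto_toWeakSpace {x : ℕ → X} (hx : WeaklyNullSeq x) :
    Tendsto (fun n => toWeakSpace ℝ X (x n)) atTop (𝓝 0) := by
  simpa using (tendsto_toWeakSpace_iff (y := (0 : X))).mpr fun f => by simpa using hx f

theorem WeaklyNullSeq.relWeakCompact_range {x : ℕ → X} (hx : WeaklyNullSeq x) :
    RelWeakCompact X (range x) := by
  have hK := hx.tendsto_toWeakSpace.isCompact_insert_range
  refine hK.of_isClosed_subset isClosed_closure (closure_minimal ?_ hK.isClosed)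
  rintro - ⟨-, ⟨n, rfl⟩, rfl⟩
  exact mem_insert_of_mem _ ⟨n, rfl⟩

theorem WeaklyNullSeq.tendsto_norm_zero {x : ℕ → X} (hx : WeaklyNullSeq x)
    (hc : RelNormCompact X (range x)) : Tendsto (fun n => ‖x n‖) atTop (𝓝 0) := by
  suffices Tendsto x atTop (𝓝 0) by simpa using this.norm
  refine hc.tendsto_nhds_of_unique_mapClusterPt
    (Eventually.of_forall fun n => subset_closure ⟨n, rfl⟩) fun a _ ha => ?_
  obtain ⟨φ, hφ, hxφ⟩ := ha.tendsto_subseq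
  refine (SeparatingDual.eq_zero_iff_forall_dual_eq_zero (R := ℝ) a).mpr fun f => ?_
  exact tendsto_nhds_unique ((f.continuous.tendsto a).comp hxφ) ((hx f).comp hφ.tendsto_atTop)

theorem Convex.isClosed_toWeakSpace_image {s : Set X} (hs : Convex ℝ s) (hc : IsClosed s) :
    IsClosed (toWeakSpace ℝ X '' s) := by
  rw [← hc.closure_eq, hs.toWeakSpace_closure ℝ]
  exact isClosed_closure

theorem RelWeakCompact.exists_tendsto_subseq {A : Set X} (hA : RelWeakCompact X A) {a : ℕ → X}
    (ha : ∀ n, a n ∈ A) : ∃ z : X, ∃ φ : ℕ → ℕ, StrictMono φ ∧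
      Tendsto (fun n => toWeakSpace ℝ X (a (φ n))) atTop (𝓝 (toWeakSpace ℝ X z)) := by
  -- The closed span `Y` of the sequence is separable, so countably many functionals separate its
  -- points, and it is still weakly closed because it is convex.
  set Y := (Submodule.span ℝ (range a)).topologicalClosure
  obtain ⟨F, hF_count, hF_sep⟩ := (((countable_range a).isSeparable.span (R := ℝ)).closure :
    TopologicalSpace.IsSeparable (Y : Set X)).exists_countable_separating_dual (𝕜 := ℝ)
  have hY_closed := Y.convex.isClosed_toWeakSpace_image (Submodule.isClosed_topologicalClosure _)
  set K := closure (toWeakSpace ℝ X '' A) ∩ toWeakSpace ℝ X '' Y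
  have : Countable F := hF_count.to_subtype
  set Φ : WeakSpace ℝ X → F → ℝ := fun w f => (f : StrongDual ℝ X) w
  have hΦ : Continuous Φ :=
    continuous_pi fun f => WeakBilin.eval_continuous (topDualPairing ℝ X).flip (f : StrongDual ℝ X)
  have hΦ_inj : InjOn Φ K := by
    rintro - ⟨-, y₁, hy₁, rfl⟩ - ⟨-, y₂, hy₂, rfl⟩ h
    refine congrArg _ (sub_eq_zero.mp (hF_sep _ (Y.sub_mem hy₁ hy₂) fun f hf => ?_))
    rw [map_sub, sub_eq_zero]
    exact congr_fun h ⟨f, hf⟩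
  have haK : ∀ n, toWeakSpace ℝ X (a n) ∈ K := fun n =>
    ⟨subset_closure (mem_image_of_mem _ (ha n)), mem_image_of_mem _
      (Submodule.le_topologicalClosure _ (Submodule.subset_span (mem_range_self n)))⟩
  obtain ⟨z, -, φ, hφ, hz⟩ :=
    (hA.inter_right hY_closed).isSeqCompact_of_continuous_injOn hΦ hΦ_inj haK
  exact ⟨z, φ, hφ, hz⟩

theorem RelWeakCompact.weaklyPrecompact {A : Set X} (hA : RelWeakCompact X A) :
    WeaklyPrecompact A := fun a ha => by
  obtain ⟨z, φ, hφ, hz⟩ := hA.exists_tendsto_subseq ha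
  exact ⟨φ, hφ, fun f => ⟨f z, tendsto_toWeakSpace_iff.mp hz f⟩⟩

end WeakTopology

section CoarsePLimited

open scoped Pointwise

variable {X : Type*} [NormedAddCommGroup X] [NormedSpace ℝ X] {p : ℝ≥0∞} [Fact (1 ≤ p)]

theorem RelNormCompact.mono {A B : Set X} (hA : RelNormCompact X A) (h : B ⊆ A) :
    RelNormCompact X B :=
  hA.of_isClosed_subset isClosed_closure (closure_mono h)

theorem RelNormCompact.sub {A B : Set X} (hA : RelNormCompact X A) (hB : RelNormCompact X B) :
    RelNormCompact X (A - B) := by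
  have hK : IsCompact (closure A - closure B) := by
    simpa only [sub_eq_add_neg] using hA.add hB.neg
  exact hK.of_isClosed_subset isClosed_closure
    (closure_minimal (sub_subset_sub subset_closure subset_closure) hK.isClosed)

theorem CoarsePLimited.mono {A B : Set X} (hA : CoarsePLimited p A) (h : B ⊆ A) :
    CoarsePLimited p B := fun T =>
  (hA T).mono (image_mono h)

theorem CoarsePLimited.sub {A B : Set X} (hA : CoarsePLimited p A) (hB : CoarsePLimited p B) :
    CoarsePLimited p (A - B) := fun T => by
  rw [image_sub]
  exact (hA T).sub (hB T)

theorem WeaklyCauchySeq.weaklyNullSeq_sub {y : ℕ → X} (hy : WeaklyCauchySeq y) {m n : ℕ → ℕ}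
    (hm : Tendsto m atTop atTop) (hn : Tendsto n atTop atTop) :
    WeaklyNullSeq fun k => y (m k) - y (n k) := fun f => by
  obtain ⟨l, hl⟩ := hy f
  simpa using (hl.comp hm).sub (hl.comp hn)

theorem WeaklyCauchySeq.cauchySeq
    (hnull : ∀ z : ℕ → X, CoarsePLimited p (range z) → WeaklyNullSeq z →
      Tendsto (fun n => ‖z n‖) atTop (𝓝 0))
    {A : Set X} (hA : CoarsePLimited p A) {y : ℕ → X} (hyA : ∀ n, y n ∈ A)
    (hy : WeaklyCauchySeq y) : CauchySeq y := by
  refine cauchySeq_iff_tendsto_dist_atTop_0.mpr (tendsto_of_seq_tendsto fun ψ hψ => ?_)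
  rw [← prod_atTop_atTop_eq] at hψ
  have hz := hnull _ ((hA.sub hA).mono ?_)
    (hy.weaklyNullSeq_sub (tendsto_fst.comp hψ) (tendsto_snd.comp hψ))
  · simpa [Function.comp_def, dist_eq_norm] using hz
  · rintro - ⟨k, rfl⟩
    exact sub_mem_sub (hyA _) (hyA _)

theorem WeaklyPrecompact.relNormCompact [CompleteSpace X]
    (hnull : ∀ z : ℕ → X, CoarsePLimited p (range z) → WeaklyNullSeq z →
      Tendsto (fun n => ‖z n‖) atTop (𝓝 0))
    {A : Set X} (hw : WeaklyPrecompact A) (hA : CoarsePLimited p A) : RelNormCompact X A := by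
  refine (totallyBounded_closure.mpr (totallyBounded_of_forall_exists_cauchySeq_subseq
    fun y hy => ?_)).isCompact_of_isClosed isClosed_closure
  obtain ⟨φ, hφ, hwc⟩ := hw y hy
  exact ⟨φ, hφ, hwc.cauchySeq hnull hA fun n => hy _⟩

end CoarsePLimited

theorem stmt9_general (p : ℝ≥0∞) [Fact (1 ≤ p)]
    {X : Type*} [NormedAddCommGroup X] [NormedSpace ℝ X] [CompleteSpace X] :
    ((∀ A : Set X, CoarsePLimited p A → RelWeakCompact X A → RelNormCompact X A) ↔
      (∀ x : ℕ → X, CoarsePLimited p (Set.range x) → WeaklyNullSeq x →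
        Filter.Tendsto (fun n => ‖x n‖) Filter.atTop (nhds 0))) ∧
    ((∀ x : ℕ → X, CoarsePLimited p (Set.range x) → WeaklyNullSeq x →
        Filter.Tendsto (fun n => ‖x n‖) Filter.atTop (nhds 0)) ↔
      (∀ A : Set X, CoarsePLimited p A → WeaklyPrecompact A → RelNormCompact X A)) := by
  refine ⟨⟨fun hRp x hx hwn => ?_, fun hnull A hA hw => ?_⟩,
    ⟨fun hnull A hA hw => hw.relNormCompact hnull hA, fun hprec x hx hwn => ?_⟩⟩
  · exact hwn.tendsto_norm_zero (hRp _ hx hwn.relWeakCompact_range)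
  · exact hw.weaklyPrecompact.relNormCompact hnull hA
  · exact hwn.tendsto_norm_zero (hprec _ hx hwn.relWeakCompact_range.weaklyPrecompact)

theorem stmt9 (p : ℝ≥0∞) [Fact (1 ≤ p)] (hp : 1 < p) (hp' : p ≠ ⊤)
    {X : Type*} [NormedAddCommGroup X] [NormedSpace ℝ X] [CompleteSpace X] :
    ((∀ A : Set X, CoarsePLimited p A → RelWeakCompact X A → RelNormCompact X A) ↔
      (∀ x : ℕ → X, CoarsePLimited p (Set.range x) → WeaklyNullSeq x →
        Filter.Tendsto (fun n => ‖x n‖) Filter.atTop (nhds 0))) ∧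
    ((∀ x : ℕ → X, CoarsePLimited p (Set.range x) → WeaklyNullSeq x →
        Filter.Tendsto (fun n => ‖x n‖) Filter.atTop (nhds 0)) ↔
      (∀ A : Set X, CoarsePLimited p A → WeaklyPrecompact A → RelNormCompact X A)) :=
  stmt9_general p
end

section
/- Let 1 < p, q < ∞ with 1/p + 1/q ≥ 1, and denote by (eₙ) and (e′ₙ) the unit vector bases of ℓp and ℓq. Then the sequence (eₙ ⊗ e′ₙ) in the projective tensor product ℓp ⊗̂π ℓq is equivalent to the unit vector basis of ℓ1; that is, there is a constant C > 0 such that C Σ |aₙ| ≤ ‖Σ aₙ (eₙ ⊗ e′ₙ)‖π ≤ Σ |aₙ| for all finitely supported scalar sequences (aₙ). -/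
open Filter Topology NormedSpace
open scoped ENNReal NNReal

/-!
The upper estimate is the triangle inequality together with `‖m x y‖ ≤ ‖x‖ * ‖y‖`, which follows
from the lifting property applied to `f ∘ m` for functionals `f` on `Z`. For the lower estimate,
lift the diagonal form `(x, y) ↦ ∑ n ∈ s, sign (a n) * x n * y n`, which takes the value
`∑ n ∈ s, |a n|` on the tensor. It has norm at most `1` because `∑ |x n * y n| ≤ ‖x‖_p * ‖y‖_q`
when `1/p + 1/q ≥ 1`: for `1/r = 1/p + 1/q` we have `r ≤ 1`, so `(∑ |x n * y n|) ^ r` is at most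
`∑ |x n * y n| ^ r`, which Hölder's inequality for the triple `(p, q, r)` bounds by
`(‖x‖_p * ‖y‖_q) ^ r`.
-/

theorem Real.rpow_sum_le_sum_rpow {ι : Type*} (s : Finset ι) {f : ι → ℝ} (hf : ∀ i ∈ s, 0 ≤ f i)
    {r : ℝ} (hr₀ : 0 < r) (hr₁ : r ≤ 1) : (∑ i ∈ s, f i) ^ r ≤ ∑ i ∈ s, f i ^ r :=
  Finset.le_sum_of_subadditive_on_pred (· ^ r) (0 ≤ ·) (by simp [Real.zero_rpow hr₀.ne'])
    (fun _ _ ha hb => Real.rpow_add_le_add_rpow ha hb hr₀.le hr₁) (fun _ _ => add_nonneg) f hf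

theorem ENNReal.one_le_toReal_inv_add_toReal_inv {p q : ℝ≥0∞} (hp₀ : p ≠ 0) (hq₀ : q ≠ 0)
    (hpq : 1 ≤ 1 / p + 1 / q) : 1 ≤ p.toReal⁻¹ + q.toReal⁻¹ := by
  have h := ENNReal.toReal_mono (by simp [hp₀, hq₀]) hpq
  rwa [ENNReal.toReal_add (by simp [hp₀]) (by simp [hq₀]), one_div, one_div,
    ENNReal.toReal_inv, ENNReal.toReal_inv, ENNReal.toReal_one] at h

namespace lp

variable {α : Type*} {p q : ℝ≥0∞}

section

variable {E F : α → Type*} [∀ i, NormedAddCommGroup (E i)] [∀ i, NormedAddCommGroup (F i)]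

theorem sum_rpow_rpow_le_norm_rpow (hp : 0 < p.toReal) {r : ℝ} (hr : 0 ≤ r) (x : lp E p)
    (s : Finset α) : (∑ i ∈ s, ‖x i‖ ^ p.toReal) ^ (r / p.toReal) ≤ ‖x‖ ^ r := by
  calc (∑ i ∈ s, ‖x i‖ ^ p.toReal) ^ (r / p.toReal)
      ≤ (‖x‖ ^ p.toReal) ^ (r / p.toReal) := by
        gcongr
        exact sum_rpow_le_norm_rpow hp x s
    _ = ‖x‖ ^ r := by rw [← Real.rpow_mul (norm_nonneg' x), mul_div_cancel₀ _ hp.ne']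

theorem sum_norm_mul_norm_le (hp₀ : p ≠ 0) (hp : p ≠ ∞) (hq₀ : q ≠ 0) (hq : q ≠ ∞)
    (hpq : 1 ≤ 1 / p + 1 / q) (x : lp E p) (y : lp F q) (s : Finset α) :
    ∑ i ∈ s, ‖x i‖ * ‖y i‖ ≤ ‖x‖ * ‖y‖ := by
  set r := (p.toReal⁻¹ + q.toReal⁻¹)⁻¹
  have hpqr : p.toReal.HolderTriple q.toReal r :=
    .of_pos (ENNReal.toReal_pos hp₀ hp) (ENNReal.toReal_pos hq₀ hq)
  have hr₁ : r ≤ 1 := inv_le_one_of_one_le₀ (ENNReal.one_le_toReal_inv_add_toReal_inv hp₀ hq₀ hpq)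
  have hxy := mul_nonneg (norm_nonneg' x) (norm_nonneg' y)
  refine (Real.rpow_le_rpow_iff (Finset.sum_nonneg fun i _ => by positivity) hxy hpqr.pos').mp ?_
  calc (∑ i ∈ s, ‖x i‖ * ‖y i‖) ^ r ≤ ∑ i ∈ s, (‖x i‖ * ‖y i‖) ^ r :=
        Real.rpow_sum_le_sum_rpow s (fun _ _ => by positivity) hpqr.pos' hr₁
    _ ≤ (∑ i ∈ s, ‖x i‖ ^ p.toReal) ^ (r / p.toReal) *
          (∑ i ∈ s, ‖y i‖ ^ q.toReal) ^ (r / q.toReal) :=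
        Real.Lr_rpow_le_Lp_mul_Lq_of_nonneg s hpqr (fun _ _ => norm_nonneg _)
          (fun _ _ => norm_nonneg _)
    _ ≤ ‖x‖ ^ r * ‖y‖ ^ r :=
        mul_le_mul (sum_rpow_rpow_le_norm_rpow hpqr.pos hpqr.nonneg' x s)
          (sum_rpow_rpow_le_norm_rpow hpqr.symm.pos hpqr.nonneg' y s) (by positivity)
          (Real.rpow_nonneg (norm_nonneg' x) _)
    _ = (‖x‖ * ‖y‖) ^ r := (Real.mul_rpow (norm_nonneg' x) (norm_nonneg' y)).symm

end

section

variable (p q) [Fact (1 ≤ p)] [Fact (1 ≤ q)]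

noncomputable def diagonalForm (s : Finset α) (c : α → ℝ) :
    lp (fun _ : α => ℝ) p →L[ℝ] lp (fun _ : α => ℝ) q →L[ℝ] ℝ :=
  ∑ i ∈ s, c i • (ContinuousLinearMap.mul ℝ ℝ).bilinearComp
    (evalCLM ℝ (fun _ : α => ℝ) p i) (evalCLM ℝ (fun _ : α => ℝ) q i)

variable {p q}

@[simp]
theorem diagonalForm_apply (s : Finset α) (c : α → ℝ) (x : lp (fun _ : α => ℝ) p)
    (y : lp (fun _ : α => ℝ) q) : diagonalForm p q s c x y = ∑ i ∈ s, c i * (x i * y i) := by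
  simp [diagonalForm, evalCLM]

theorem diagonalForm_single_single [DecidableEq α] {s : Finset α} {i : α} (hi : i ∈ s)
    (c : α → ℝ) : diagonalForm p q s c (lp.single p i 1) (lp.single q i 1) = c i := by
  rw [diagonalForm_apply, Finset.sum_eq_single_of_mem i hi fun j _ hj => by simp [hj]]
  simp

theorem norm_diagonalForm_le (hp : p ≠ ∞) (hq : q ≠ ∞) (hpq : 1 ≤ 1 / p + 1 / q) (s : Finset α)
    {c : α → ℝ} (hc : ∀ i ∈ s, |c i| ≤ 1) : ‖diagonalForm p q s c‖ ≤ 1 := by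
  refine ContinuousLinearMap.opNorm_le_bound₂ _ zero_le_one fun x y => ?_
  have hp₀ : p ≠ 0 := (zero_lt_one.trans_le Fact.out).ne'
  have hq₀ : q ≠ 0 := (zero_lt_one.trans_le Fact.out).ne'
  calc ‖diagonalForm p q s c x y‖ ≤ ∑ i ∈ s, ‖c i * (x i * y i)‖ := by
        rw [diagonalForm_apply]; exact norm_sum_le _ _
    _ ≤ ∑ i ∈ s, ‖x i‖ * ‖y i‖ := Finset.sum_le_sum fun i hi => by
        rw [norm_mul, norm_mul, Real.norm_eq_abs (c i)]
        exact mul_le_of_le_one_left (by positivity) (hc i hi)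
    _ ≤ 1 * ‖x‖ * ‖y‖ := by
        rw [one_mul]; exact sum_norm_mul_norm_le hp₀ hp hq₀ hq hpq x y s

end

end lp

namespace IsProjTensorProduct

variable {X Y Z : Type*} [NormedAddCommGroup X] [NormedSpace ℝ X] [NormedAddCommGroup Y]
  [NormedSpace ℝ Y] [NormedAddCommGroup Z] [NormedSpace ℝ Z] {m : X →L[ℝ] Y →L[ℝ] Z}

theorem continuousLinearMap_ext (hm : IsProjTensorProduct X Y Z m) {W : Type*}
    [NormedAddCommGroup W] [NormedSpace ℝ W] {T T' : Z →L[ℝ] W}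
    (h : ∀ x y, T (m x y) = T' (m x y)) : T = T' :=
  ContinuousLinearMap.ext_on hm.dense_span <| by rintro _ ⟨x, y, rfl⟩; exact h x y

theorem norm_apply_le (hm : IsProjTensorProduct X Y Z m) (x : X) (y : Y) :
    ‖m x y‖ ≤ ‖x‖ * ‖y‖ := by
  refine norm_le_dual_bound ℝ _ (by positivity) fun f => ?_
  set B := (ContinuousLinearMap.compL ℝ Y Z ℝ f).comp m
  obtain ⟨T, hT, hTm⟩ := hm.lift ℝ B
  have hTf : T = f := hm.continuousLinearMap_ext fun x y => by simp [B, hTm]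
  calc ‖f (m x y)‖ = ‖B x y‖ := rfl
    _ ≤ ‖B‖ * ‖x‖ * ‖y‖ := B.le_opNorm₂ x y
    _ = ‖x‖ * ‖y‖ * ‖f‖ := by rw [← hT, hTf]; ring

theorem norm_sum_smul_le (hm : IsProjTensorProduct X Y Z m) {ι : Type*} (s : Finset ι)
    (a : ι → ℝ) (x : ι → X) (y : ι → Y) :
    ‖∑ i ∈ s, a i • m (x i) (y i)‖ ≤ ∑ i ∈ s, |a i| * (‖x i‖ * ‖y i‖) :=
  (norm_sum_le _ _).trans <| Finset.sum_le_sum fun i _ => by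
    rw [norm_smul, Real.norm_eq_abs]; gcongr; exact hm.norm_apply_le _ _

theorem sum_mul_apply_le_norm_sum_smul (hm : IsProjTensorProduct X Y Z m)
    (B : X →L[ℝ] Y →L[ℝ] ℝ) (hB : ‖B‖ ≤ 1) {ι : Type*} (s : Finset ι) (a : ι → ℝ) (x : ι → X)
    (y : ι → Y) : ∑ i ∈ s, a i * B (x i) (y i) ≤ ‖∑ i ∈ s, a i • m (x i) (y i)‖ := by
  obtain ⟨T, hT, hTm⟩ := hm.lift ℝ B
  calc ∑ i ∈ s, a i * B (x i) (y i) = T (∑ i ∈ s, a i • m (x i) (y i)) := by simp [hTm]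
    _ ≤ ‖T‖ * ‖∑ i ∈ s, a i • m (x i) (y i)‖ := (le_abs_self _).trans (T.le_opNorm _)
    _ ≤ ‖∑ i ∈ s, a i • m (x i) (y i)‖ := mul_le_of_le_one_left (norm_nonneg _) (hT ▸ hB)

end IsProjTensorProduct

theorem stmt12_general (p q : ℝ≥0∞) [Fact (1 ≤ p)] [Fact (1 ≤ q)]
    (hp' : p ≠ ⊤) (hq' : q ≠ ⊤) (hpq : 1 ≤ 1 / p + 1 / q)
    {Z : Type*} [NormedAddCommGroup Z] [NormedSpace ℝ Z]
    (m : lp (fun _ : ℕ => ℝ) p →L[ℝ] lp (fun _ : ℕ => ℝ) q →L[ℝ] Z)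
    (hm : IsProjTensorProduct (lp (fun _ : ℕ => ℝ) p) (lp (fun _ : ℕ => ℝ) q) Z m) :
    ∃ C : ℝ, 0 < C ∧ ∀ (s : Finset ℕ) (a : ℕ → ℝ),
      C * ∑ n ∈ s, |a n| ≤ ‖∑ n ∈ s, a n • m (lp.single p n 1) (lp.single q n 1)‖ ∧
      ‖∑ n ∈ s, a n • m (lp.single p n 1) (lp.single q n 1)‖ ≤ ∑ n ∈ s, |a n| := by
  refine ⟨1, one_pos, fun s a => ⟨?_, ?_⟩⟩
  · have hsign : ∀ n ∈ s, |(SignType.sign (a n) : ℝ)| ≤ 1 := fun n _ => by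
      rcases lt_trichotomy (a n) 0 with h | h | h <;> simp [h]
    calc 1 * ∑ n ∈ s, |a n|
        = ∑ n ∈ s, a n * lp.diagonalForm p q s (fun n => SignType.sign (a n))
            (lp.single p n 1) (lp.single q n 1) := by
          rw [one_mul]
          exact Finset.sum_congr rfl fun n hn => by
            rw [lp.diagonalForm_single_single hn, self_mul_sign]
      _ ≤ _ := hm.sum_mul_apply_le_norm_sum_smul _
          (lp.norm_diagonalForm_le hp' hq' hpq s hsign) _ _ _ _
  · have hsingle (r : ℝ≥0∞) [Fact (1 ≤ r)] (n : ℕ) :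
        ‖lp.single (E := fun _ : ℕ => ℝ) r n 1‖ = 1 := by
      simpa using lp.norm_single (E := fun _ : ℕ => ℝ) (zero_lt_one.trans_le Fact.out) n 1
    simpa [hsingle] using hm.norm_sum_smul_le s a (fun n => lp.single p n 1)
      (fun n => lp.single q n 1)

theorem stmt12 (p q : ℝ≥0∞) [Fact (1 ≤ p)] [Fact (1 ≤ q)]
    (hp : 1 < p) (hp' : p ≠ ⊤) (hq : 1 < q) (hq' : q ≠ ⊤) (hpq : 1 ≤ 1 / p + 1 / q)
    {Z : Type*} [NormedAddCommGroup Z] [NormedSpace ℝ Z] [CompleteSpace Z]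
    (m : lp (fun _ : ℕ => ℝ) p →L[ℝ] lp (fun _ : ℕ => ℝ) q →L[ℝ] Z)
    (hm : IsProjTensorProduct (lp (fun _ : ℕ => ℝ) p) (lp (fun _ : ℕ => ℝ) q) Z m) :
    ∃ C : ℝ, 0 < C ∧ ∀ (s : Finset ℕ) (a : ℕ → ℝ),
      C * ∑ n ∈ s, |a n| ≤ ‖∑ n ∈ s, a n • m (lp.single p n 1) (lp.single q n 1)‖ ∧
      ‖∑ n ∈ s, a n • m (lp.single p n 1) (lp.single q n 1)‖ ≤ ∑ n ∈ s, |a n| :=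
  stmt12_general p q hp' hq' hpq m hm
end

section
/- Let X and Y be Banach spaces, let (xₙ) be a bounded unconditional Schauder basis of X with unconditional constant K_u, and let (yₙ) be a bounded sequence in Y. If the sequence (xₙ ⊗ yₙ) in X ⊗̂π Y is an ℓ1⁺-sequence (i.e., there exist T ∈ L(X, Y*) and ε > 0 with ⟨T(xₙ), yₙ⟩ ≥ ε for all n), then (xₙ ⊗ yₙ) is equivalent to the unit vector basis of ℓ1: ‖Σ λₙ xₙ ⊗ yₙ‖π ≥ (ε / (‖T‖ K_u)) Σ |λₙ| for all finitely supported scalar sequences (λₙ). -/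
open Filter Topology NormedSpace
open scoped ENNReal NNReal

theorem stmt16 {X Y Z : Type*} [NormedAddCommGroup X] [NormedSpace ℝ X] [CompleteSpace X] [NormedAddCommGroup Y] [NormedSpace ℝ Y] [CompleteSpace Y] [NormedAddCommGroup Z] [NormedSpace ℝ Z] [CompleteSpace Z]
    (m : X →L[ℝ] Y →L[ℝ] Z) (hm : IsProjTensorProduct X Y Z m)
    (x : ℕ → X) (xs : ℕ → X →L[ℝ] ℝ) (y : ℕ → Y)
    (hxb : ∃ b : ℝ, ∀ n, ‖x n‖ ≤ b) (hyb : ∃ b : ℝ, ∀ n, ‖y n‖ ≤ b)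
    -- `(xₙ)` is an unconditional basis of `X` with biorthogonal functionals `(xₙ*)`
    (hbio : ∀ i j, xs i (x j) = if i = j then 1 else 0)
    (hbasis : ∀ v : X, HasSum (fun n => xs n v • x n) v)
    (Ku : ℝ) (hKu : 0 < Ku)
    (hKu' : ∀ (ε : ℕ → ℝ), (∀ n, ε n = 1 ∨ ε n = -1) →
      ∀ (v : X) (s : Finset ℕ), ‖∑ n ∈ s, ε n • xs n v • x n‖ ≤ Ku * ‖v‖)
    -- `(xₙ ⊗ yₙ)` is an `ℓ1⁺`-sequence, witnessed by `T ∈ L(X, Y*) = (X ⊗̂π Y)*` and `ε > 0`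
    (T : X →L[ℝ] (Y →L[ℝ] ℝ)) (ε : ℝ) (hε : 0 < ε) (hT : ∀ n, ε ≤ T (x n) (y n)) :
    ∀ (s : Finset ℕ) (lam : ℕ → ℝ),
      (ε / (‖T‖ * Ku)) * ∑ n ∈ s, |lam n| ≤ ‖∑ n ∈ s, lam n • m (x n) (y n)‖ := by
  intro s lam
  -- signs
  set sg : ℕ → ℝ := fun n => if 0 ≤ lam n then 1 else -1 with hsg
  have hsgpm : ∀ n, sg n = 1 ∨ sg n = -1 := by
    intro n; by_cases h : 0 ≤ lam n <;> simp [hsg, h]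
  have hsglam : ∀ n, sg n * lam n = |lam n| := by
    intro n; by_cases h : 0 ≤ lam n
    · simp [hsg, h, abs_of_nonneg h]
    · simp [hsg, h, abs_of_neg (lt_of_not_ge h)]
  -- the sign multiplier operator
  set M : X →L[ℝ] X := ∑ n ∈ s, sg n • ((xs n).smulRight (x n)) with hM
  have hMapply : ∀ v, M v = ∑ n ∈ s, sg n • (xs n v • x n) := by
    intro v
    simp [hM, ContinuousLinearMap.sum_apply]
  have hMnorm : ‖M‖ ≤ Ku := by
    apply ContinuousLinearMap.opNorm_le_bound _ hKu.le
    intro v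
    rw [hMapply v]
    exact hKu' sg hsgpm v s
  have hMx : ∀ n ∈ s, M (x n) = sg n • x n := by
    intro n hn
    rw [hMapply]
    rw [Finset.sum_eq_single n]
    · simp [hbio]
    · intro k hk hkn
      simp [hbio, hkn]
    · intro h; exact absurd hn h
  -- the functional
  set B : X →L[ℝ] Y →L[ℝ] ℝ := T.comp M with hB
  have hBnorm : ‖B‖ ≤ ‖T‖ * Ku :=
    le_trans (ContinuousLinearMap.opNorm_comp_le T M)
      (mul_le_mul_of_nonneg_left hMnorm (norm_nonneg T))
  obtain ⟨F, hFnorm, hFm⟩ := hm.lift ℝ B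
  have hTne : T ≠ 0 := by
    intro h
    have := hT 0
    rw [h] at this
    simp at this
    linarith
  have hTpos : 0 < ‖T‖ := lt_of_le_of_ne (norm_nonneg T)
    (fun h => hTne (T.opNorm_zero_iff.mp h.symm))
  have hc : 0 < ‖T‖ * Ku := mul_pos hTpos hKu
  -- evaluate F at the sum
  have hFsum : F (∑ n ∈ s, lam n • m (x n) (y n))
      = ∑ n ∈ s, |lam n| * T (x n) (y n) := by
    rw [map_sum]
    apply Finset.sum_congr rfl
    intro n hn
    rw [map_smul, hFm, hB, ContinuousLinearMap.comp_apply, hMx n hn]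
    simp only [map_smul, ContinuousLinearMap.coe_smul', Pi.smul_apply, smul_eq_mul]
    rw [← mul_assoc, mul_comm (lam n) (sg n), hsglam]
  have hlow : ε * ∑ n ∈ s, |lam n| ≤ F (∑ n ∈ s, lam n • m (x n) (y n)) := by
    rw [hFsum, Finset.mul_sum]
    apply Finset.sum_le_sum
    intro n _
    rw [mul_comm ε (|lam n|)]
    exact mul_le_mul_of_nonneg_left (hT n) (abs_nonneg _)
  have hup : F (∑ n ∈ s, lam n • m (x n) (y n))
      ≤ (‖T‖ * Ku) * ‖∑ n ∈ s, lam n • m (x n) (y n)‖ := by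
    calc F (∑ n ∈ s, lam n • m (x n) (y n))
        ≤ ‖F (∑ n ∈ s, lam n • m (x n) (y n))‖ := le_abs_self _
      _ ≤ ‖F‖ * ‖∑ n ∈ s, lam n • m (x n) (y n)‖ := F.le_opNorm _
      _ ≤ (‖T‖ * Ku) * ‖∑ n ∈ s, lam n • m (x n) (y n)‖ := by
          apply mul_le_mul_of_nonneg_right _ (norm_nonneg _)
          rw [hFnorm]; exact hBnorm
  rw [div_mul_eq_mul_div, div_le_iff₀ hc]
  calc ε * ∑ n ∈ s, |lam n| ≤ (‖T‖ * Ku) * ‖∑ n ∈ s, lam n • m (x n) (y n)‖ :=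
        le_trans hlow hup
    _ = ‖∑ n ∈ s, lam n • m (x n) (y n)‖ * (‖T‖ * Ku) := mul_comm _ _
end

section
/- Let X and Y be Banach spaces such that every bounded operator from X to Y* is compact. If (xₙ) and (yₙ) are weakly Cauchy sequences in X and Y respectively, then (xₙ ⊗ yₙ) is weakly Cauchy in the projective tensor product X ⊗̂π Y. -/
open Filter Topology NormedSpace
open scoped ENNReal NNReal

/-!
The functional `f` on `X ⊗̂π Y` corresponds to the operator `T : X → Y*`, `T x = f (m x ·)`, so
`f (xₙ ⊗ yₙ) = (T xₙ) yₙ`. As `T` is compact, `T xₙ` converges in norm to some `g ∈ Y*`, and then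
`(T xₙ) yₙ - g yₙ → 0` because `(yₙ)` is bounded, while `g yₙ` converges since `(yₙ)` is weakly
Cauchy.
-/

section WeaklyCauchy

variable {X W : Type*} [NormedAddCommGroup X] [NormedSpace ℝ X]
  [NormedAddCommGroup W] [NormedSpace ℝ W]

lemma WeaklyCauchySeq.map_s17 {x : ℕ → X} (hx : WeaklyCauchySeq x) (T : X →L[ℝ] W) :
    WeaklyCauchySeq (fun n => T (x n)) :=
  fun g => hx (g.comp T)

/-- Uniform boundedness applied to the `x n` viewed in the bidual. -/
lemma WeaklyCauchySeq.isBounded_range {x : ℕ → X} (hx : WeaklyCauchySeq x) :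
    Bornology.IsBounded (Set.range x) := by
  have hpointwise : ∀ f : StrongDual ℝ X, ∃ C, ∀ n, ‖inclusionInDoubleDual ℝ X (x n) f‖ ≤ C := by
    intro f
    obtain ⟨l, hl⟩ := hx f
    obtain ⟨C, hC⟩ := hl.norm.bddAbove_range
    exact ⟨C, fun n => hC ⟨n, rfl⟩⟩
  obtain ⟨C, hC⟩ := banach_steinhaus hpointwise
  refine isBounded_iff_forall_norm_le.mpr ⟨C, ?_⟩
  rintro _ ⟨n, rfl⟩
  rw [← (inclusionInDoubleDualLi ℝ (E := X)).norm_map (x n)]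
  exact hC n

lemma WeaklyCauchySeq.isBoundedUnder_norm {x : ℕ → X} (hx : WeaklyCauchySeq x) :
    IsBoundedUnder (· ≤ ·) atTop (norm ∘ x) := by
  obtain ⟨C, hC⟩ := isBounded_iff_forall_norm_le.mp hx.isBounded_range
  exact isBoundedUnder_of ⟨C, fun n => hC _ ⟨n, rfl⟩⟩

/-- Any two cluster points of `u` in `K` have the same image under every functional, hence
coincide by Hahn–Banach. -/
lemma WeaklyCauchySeq.exists_tendsto_of_isCompact {u : ℕ → W} {K : Set W} (hK : IsCompact K)
    (huK : ∀ n, u n ∈ K) (hu : WeaklyCauchySeq u) : ∃ v, Tendsto u atTop (𝓝 v) := by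
  have cluster_unique : ∀ {φ ψ : ℕ → ℕ} {v w : W}, Tendsto φ atTop atTop →
      Tendsto ψ atTop atTop → Tendsto (u ∘ φ) atTop (𝓝 v) → Tendsto (u ∘ ψ) atTop (𝓝 w) →
      v = w := by
    intro φ ψ v w hφ hψ hv hw
    refine (SeparatingDual.eq_iff_forall_dual_eq (R := ℝ)).mpr fun g => ?_
    obtain ⟨l, hl⟩ := hu g
    exact (tendsto_nhds_unique ((g.continuous.tendsto v).comp hv) (hl.comp hφ)).trans
      (tendsto_nhds_unique ((g.continuous.tendsto w).comp hw) (hl.comp hψ)).symm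
  obtain ⟨v, -, φ, hφ, hv⟩ := hK.tendsto_subseq huK
  refine ⟨v, tendsto_of_subseq_tendsto fun ns hns => ?_⟩
  obtain ⟨w, -, ψ, hψ, hw⟩ := hK.tendsto_subseq fun n => huK (ns n)
  exact ⟨ψ, cluster_unique (hns.comp hψ.tendsto_atTop) hφ.tendsto_atTop hw hv ▸ hw⟩

lemma IsCompactOperator.exists_tendsto_of_weaklyCauchySeq {T : X →L[ℝ] W}
    (hT : IsCompactOperator T) {x : ℕ → X} (hx : WeaklyCauchySeq x) :
    ∃ v, Tendsto (fun n => T (x n)) atTop (𝓝 v) :=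
  (hx.map_s17 T).exists_tendsto_of_isCompact
    (hT.isCompact_closure_image_of_bounded (𝕜₁ := ℝ) hx.isBounded_range)
    fun n => subset_closure ⟨x n, ⟨n, rfl⟩, rfl⟩

end WeaklyCauchy

lemma tendsto_apply_apply_of_tendsto {𝕜 E F ι : Type*} [NontriviallyNormedField 𝕜]
    [NormedAddCommGroup E] [NormedSpace 𝕜 E] [NormedAddCommGroup F] [NormedSpace 𝕜 F]
    {l : Filter ι} {T : ι → E →L[𝕜] F} {g : E →L[𝕜] F} {y : ι → E} {a : F}
    (hT : Tendsto T l (𝓝 g)) (hy : IsBoundedUnder (· ≤ ·) l (norm ∘ y))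
    (hgy : Tendsto (fun i => g (y i)) l (𝓝 a)) :
    Tendsto (fun i => T i (y i)) l (𝓝 a) := by
  have herr : Tendsto (fun i => (T i - g) (y i)) l (𝓝 0) :=
    (tendsto_sub_nhds_zero_iff.mpr hT).op_zero_isBoundedUnder_le hy (fun S v => S v)
      fun S v => S.le_opNorm v
  simpa using hgy.add herr

theorem stmt17_general {X Y Z : Type*} [NormedAddCommGroup X] [NormedSpace ℝ X] [NormedAddCommGroup Y] [NormedSpace ℝ Y] [NormedAddCommGroup Z] [NormedSpace ℝ Z]
    (m : X →L[ℝ] Y →L[ℝ] Z)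
    (hcomp : ∀ T : X →L[ℝ] (Y →L[ℝ] ℝ), IsCompactOperator T)
    (x : ℕ → X) (y : ℕ → Y) (hx : WeaklyCauchySeq x) (hy : WeaklyCauchySeq y) :
    WeaklyCauchySeq (fun n => m (x n) (y n)) := by
  intro f
  let T : X →L[ℝ] (Y →L[ℝ] ℝ) := (ContinuousLinearMap.compL ℝ Y Z ℝ f).comp m
  obtain ⟨g, hTg⟩ := (hcomp T).exists_tendsto_of_weaklyCauchySeq hx
  obtain ⟨l, hgy⟩ := hy g
  exact ⟨l, tendsto_apply_apply_of_tendsto (T := fun n => T (x n)) hTg hy.isBoundedUnder_norm hgy⟩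

theorem stmt17 {X Y Z : Type*} [NormedAddCommGroup X] [NormedSpace ℝ X] [CompleteSpace X] [NormedAddCommGroup Y] [NormedSpace ℝ Y] [CompleteSpace Y] [NormedAddCommGroup Z] [NormedSpace ℝ Z] [CompleteSpace Z]
    (m : X →L[ℝ] Y →L[ℝ] Z) (hm : IsProjTensorProduct X Y Z m)
    (hcomp : ∀ T : X →L[ℝ] (Y →L[ℝ] ℝ), IsCompactOperator T)
    (x : ℕ → X) (y : ℕ → Y) (hx : WeaklyCauchySeq x) (hy : WeaklyCauchySeq y) :
    WeaklyCauchySeq (fun n => m (x n) (y n)) :=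
  stmt17_general m hcomp x y hx hy
end
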